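/- Suppose F is strictly convex and S is a nonempty, closed, convex subset of X. Let a_1, …, a_m ∈ X (m ≥ 1) be points that are not collinear (they do not all lie on one line L(x,y)). Then the problem of minimizing x ↦ Σ_{i=1}^m ρ_F(a_i − x) over S has at most one optimal solution. If additionally X is a reflexive Banach space or S is compact, then this problem has exactly one optimal solution. -/

import Mathlib

open Set Pointwise Filter Topology Bornology Function

variable {X : Type*} [NormedAddCommGroup X] [NormedSpace ℝ X]

/-- The Minkowski gauge of `F`: `ρ_F(x) = inf {t ≥ 0 : x ∈ t • F}`. -/
noncomputable def rhoF (F : Set X) (x : X) : ℝ :=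
  sInf {t : ℝ | 0 ≤ t ∧ x ∈ t • F}

/-- The maximal time function `C_F(x; Q) = sup {ρ_F(q - x) : q ∈ Q}`. -/
noncomputable def maxTime (F Q : Set X) (x : X) : ℝ :=
  sSup ((fun q => rhoF F (q - x)) '' Q)

/-- The minimal time function `T_F(x; Θ) = inf {ρ_F(q - x) : q ∈ Θ}`. -/
noncomputable def minTime (F Θ : Set X) (x : X) : ℝ :=
  sInf ((fun q => rhoF F (q - x)) '' Θ)

/-- A normed space is reflexive if the canonical embedding into its double dual is surjective. -/
def IsReflexiveSpace (Y : Type*) [NormedAddCommGroup Y] [NormedSpace ℝ Y] : Prop :=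
  Function.Surjective (NormedSpace.inclusionInDoubleDual ℝ Y)

/-- The line through `x` and `y`: `L(x,y) = {t•x + (1-t)•y : t ∈ ℝ}`. -/
def lineThrough (x y : X) : Set X :=
  {z : X | ∃ t : ℝ, z = t • x + (1 - t) • y}

/-!
For `0 ∈ F` the gauge `ρ_F` is `gauge F`, a continuous sublinear function, so the objective
`x ↦ ∑ i, ρ_F (a i - x)` is convex and continuous. Strict convexity of `F` upgrades the triangle
inequality to `gauge F (u + v) < gauge F u + gauge F v` unless `u` and `v` lie on a common ray.
If `p ≠ q` were two minimisers, some `a j` lies off the line through them, so `a j - p` and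
`a j - q` are not on a common ray, and the midpoint of `p` and `q` does strictly better.

For existence in a reflexive space, the sublevel sets of the objective in `S` are closed, convex
and bounded (the gauge dominates a multiple of the norm); their images in the bidual are then
weak-* compact by Banach–Alaoglu, so this chain of sets has a common point, which is a minimiser.
-/

lemma rhoF_eq_gauge {F : Set X} (hF : (0 : X) ∈ F) (x : X) : rhoF F x = gauge F x := by
  rcases eq_or_ne x 0 with rfl | hx
  · have h0 : (0 : ℝ) ∈ {t : ℝ | 0 ≤ t ∧ (0 : X) ∈ t • F} :=
      ⟨le_rfl, by simpa using smul_mem_smul_set (a := (0 : ℝ)) hF⟩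
    rw [gauge_zero, rhoF]
    exact le_antisymm (csInf_le ⟨0, fun t ht => ht.1⟩ h0) (le_csInf ⟨0, h0⟩ fun t ht => ht.1)
  · rw [rhoF, gauge_def]
    congr 1
    ext t
    refine ⟨fun ⟨ht, hxt⟩ => ⟨ht.lt_of_ne ?_, hxt⟩, fun ⟨ht, hxt⟩ => ⟨ht.le, hxt⟩⟩
    rintro rfl
    obtain ⟨y, -, rfl⟩ := hxt
    exact hx (zero_smul ℝ y)

lemma sub_midpoint_eq_half_smul_add (b p q : X) :
    b - midpoint ℝ p q = (2⁻¹ : ℝ) • ((b - p) + (b - q)) := by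
  rw [midpoint_eq_smul_add, invOf_eq_inv]
  module

section Gauge

variable {F : Set X}

lemma mem_of_gauge_le_one (hFc : IsClosed F) (hFconv : Convex ℝ F) (hF0 : F ∈ 𝓝 0) {x : X}
    (hx : gauge F x ≤ 1) : x ∈ F := by
  simpa [hFc.closure_eq] using (gauge_le_one_iff_mem_closure hFconv hF0).mp hx

lemma gauge_add_lt_of_not_sameRay (hFc : IsClosed F) (hFb : IsBounded F)
    (hFs : StrictConvex ℝ F) (hF0 : F ∈ 𝓝 0) {u v : X} (huv : ¬SameRay ℝ u v) :
    gauge F (u + v) < gauge F u + gauge F v := by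
  have hFconv := hFs.convex
  have hpos : ∀ {w : X}, w ≠ 0 → 0 < gauge F w := fun hw =>
    (gauge_pos (absorbent_nhds_zero hF0) ((NormedSpace.isVonNBounded_iff ℝ).mpr hFb)).mpr hw
  have hmem : ∀ {w : X}, w ≠ 0 → (gauge F w)⁻¹ • w ∈ F := fun hw =>
    mem_of_gauge_le_one hFc hFconv hF0 <| by
      rw [gauge_smul_of_nonneg (inv_nonneg.mpr (hpos hw).le), smul_eq_mul,
        inv_mul_cancel₀ (hpos hw).ne']
  have hu : u ≠ 0 := fun h => huv (h ▸ SameRay.zero_left v)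
  have hv : v ≠ 0 := fun h => huv (h ▸ SameRay.zero_right u)
  set α := gauge F u
  set β := gauge F v
  have hα : 0 < α := hpos hu
  have hβ : 0 < β := hpos hv
  have hp : α⁻¹ • u ∈ F := hmem hu
  have hq : β⁻¹ • v ∈ F := hmem hv
  clear_value α β
  have hne : α⁻¹ • u ≠ β⁻¹ • v := by
    intro h
    refine huv ?_
    have hu' : u = α • (α⁻¹ • u) := by rw [smul_smul, mul_inv_cancel₀ hα.ne', one_smul]
    have hv' : v = β • (α⁻¹ • u) := by rw [h, smul_smul, mul_inv_cancel₀ hβ.ne', one_smul]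
    rw [hu', hv']
    exact (SameRay.sameRay_pos_smul_left _ hα).pos_smul_right hβ
  have hint : (α + β)⁻¹ • (u + v) ∈ interior F := by
    convert hFs hp hq hne (div_pos hα (add_pos hα hβ))
      (div_pos hβ (add_pos hα hβ)) (by field_simp) using 1
    rw [smul_smul, smul_smul, smul_add]
    congr 2 <;> field_simp
  have hlt := (gauge_lt_one_iff_mem_interior hFconv hF0).mpr hint
  rw [gauge_smul_of_nonneg (by positivity), smul_eq_mul, inv_mul_lt_one₀ (by positivity)] at hlt
  exact hlt

lemma gauge_sub_midpoint_le (hFconv : Convex ℝ F) (hF0 : F ∈ 𝓝 0) (b p q : X) :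
    gauge F (b - midpoint ℝ p q) ≤ (gauge F (b - p) + gauge F (b - q)) / 2 := by
  rw [sub_midpoint_eq_half_smul_add, gauge_smul_of_nonneg (by norm_num), smul_eq_mul]
  linarith [gauge_add_le hFconv (absorbent_nhds_zero hF0) (b - p) (b - q)]

lemma gauge_sub_midpoint_lt (hFc : IsClosed F) (hFb : IsBounded F)
    (hFs : StrictConvex ℝ F) (hF0 : F ∈ 𝓝 0) {b p q : X} (h : ¬SameRay ℝ (b - p) (b - q)) :
    gauge F (b - midpoint ℝ p q) < (gauge F (b - p) + gauge F (b - q)) / 2 := by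
  rw [sub_midpoint_eq_half_smul_add, gauge_smul_of_nonneg (by norm_num), smul_eq_mul]
  linarith [gauge_add_lt_of_not_sameRay hFc hFb hFs hF0 h]

end Gauge

lemma mem_lineThrough_of_sameRay {x y b : X} (hxy : x ≠ y) (h : SameRay ℝ (b - x) (b - y)) :
    b ∈ lineThrough x y := by
  rcases eq_or_ne (b - x) 0 with hx | hx
  · exact ⟨1, by rw [sub_eq_zero.mp hx]; module⟩
  rcases eq_or_ne (b - y) 0 with hy | hy
  · exact ⟨0, by rw [sub_eq_zero.mp hy]; module⟩
  obtain ⟨r, -, hr⟩ := h.exists_pos_left hx hy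
  have hr1 : r - 1 ≠ 0 := by
    rintro hr1
    rw [sub_eq_zero.mp hr1, one_smul, sub_right_inj] at hr
    exact hxy hr
  refine ⟨r / (r - 1), smul_right_injective X hr1 ?_⟩
  calc (r - 1) • b = r • x - y := by linear_combination (norm := module) hr
    _ = _ := by
      simp only [smul_add, smul_smul]
      rw [mul_div_cancel₀ _ hr1, show (r - 1) * (1 - r / (r - 1)) = -1 by field_simp; ring]
      module

section SumOfGauges

variable {F : Set X} {ι : Type*} [Fintype ι] {a : ι → X}

lemma subsingleton_setOf_isMinOn_sum_gauge_sub (hFc : IsClosed F) (hFb : IsBounded F)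
    (hFs : StrictConvex ℝ F) (hF0 : F ∈ 𝓝 0) {S : Set X} (hS : Convex ℝ S)
    (ha : ¬∃ x y : X, x ≠ y ∧ ∀ i, a i ∈ lineThrough x y) :
    {x ∈ S | ∀ y ∈ S, ∑ i, gauge F (a i - x) ≤ ∑ i, gauge F (a i - y)}.Subsingleton := by
  rintro p ⟨hpS, hp⟩ q ⟨hqS, hq⟩
  by_contra hpq
  obtain ⟨j, hj⟩ : ∃ j, a j ∉ lineThrough p q := by
    by_contra! h
    exact ha ⟨p, q, hpq, h⟩
  have hlt : ∑ i, gauge F (a i - midpoint ℝ p q) <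
      ∑ i, (gauge F (a i - p) + gauge F (a i - q)) / 2 :=
    Finset.sum_lt_sum (fun i _ => gauge_sub_midpoint_le hFs.convex hF0 _ _ _)
      ⟨j, Finset.mem_univ j, gauge_sub_midpoint_lt hFc hFb hFs hF0
        fun h => hj (mem_lineThrough_of_sameRay hpq h)⟩
  rw [← Finset.sum_div, Finset.sum_add_distrib] at hlt
  linarith [hp q hqS, hq p hpS, hp _ (hS.midpoint_mem hpS hqS)]

lemma convexOn_sum_gauge_sub (hFconv : Convex ℝ F) (hF0 : F ∈ 𝓝 0) :
    ConvexOn ℝ univ fun x => ∑ i, gauge F (a i - x) := by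
  refine ⟨convex_univ, fun x _ y _ s t hs ht hst => ?_⟩
  simp only [smul_eq_mul, Finset.mul_sum, ← Finset.sum_add_distrib]
  refine Finset.sum_le_sum fun i _ => ?_
  calc gauge F (a i - (s • x + t • y)) = gauge F (s • (a i - x) + t • (a i - y)) := by
        congr 1
        linear_combination (norm := module) -(hst • a i)
    _ ≤ gauge F (s • (a i - x)) + gauge F (t • (a i - y)) :=
        gauge_add_le hFconv (absorbent_nhds_zero hF0) _ _
    _ = s * gauge F (a i - x) + t * gauge F (a i - y) := by
        rw [gauge_smul_of_nonneg hs, gauge_smul_of_nonneg ht, smul_eq_mul, smul_eq_mul]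

lemma continuous_sum_gauge_sub (hFconv : Convex ℝ F) (hF0 : F ∈ 𝓝 0) :
    Continuous fun x => ∑ i, gauge F (a i - x) :=
  continuous_finsetSum _ fun _ _ => (continuous_gauge hFconv hF0).comp (by fun_prop)

lemma isBounded_setOf_sum_gauge_sub_le [Nonempty ι] (hFb : IsBounded F) (hF0 : F ∈ 𝓝 0)
    (r : ℝ) : IsBounded {x | ∑ i, gauge F (a i - x) ≤ r} := by
  obtain ⟨R, hR, hFR⟩ := hFb.subset_closedBall_lt 0 0
  obtain ⟨j⟩ := ‹Nonempty ι›
  refine (Metric.isBounded_closedBall (x := a j) (r := r * R)).subset fun x hx => ?_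
  have hj : gauge F (a j - x) ≤ r :=
    (Finset.single_le_sum (fun i _ => gauge_nonneg (a i - x)) (Finset.mem_univ j)).trans hx
  have := (le_gauge_of_subset_closedBall (absorbent_nhds_zero hF0) hR.le hFR).trans hj
  rw [div_le_iff₀ hR] at this
  rwa [Metric.mem_closedBall, dist_comm, dist_eq_norm]

end SumOfGauges

section Reflexive

noncomputable def toWeakBidual (x : X) : WeakDual ℝ (StrongDual ℝ X) :=
  StrongDual.toWeakDual (NormedSpace.inclusionInDoubleDual ℝ X x)

lemma toWeakBidual_injective : Injective (toWeakBidual (X := X)) := fun _ _ h =>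
  (NormedSpace.inclusionInDoubleDualLi ℝ (E := X)).injective (StrongDual.toWeakDual.injective h)

/-- By reflexivity a point outside the image is `toWeakBidual x` with `x ∉ C`, and a functional
separating `x` from `C` cuts out a weak-* neighbourhood of it missing the image. -/
lemma IsReflexiveSpace.isClosed_image_toWeakBidual (hX : IsReflexiveSpace X) {C : Set X}
    (hCc : IsClosed C) (hC : Convex ℝ C) : IsClosed (toWeakBidual '' C) := by
  refine isOpen_compl_iff.mp (isOpen_iff_mem_nhds.mpr fun φ hφ => ?_)
  obtain ⟨x, hx⟩ := hX (WeakDual.toStrongDual φ)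
  obtain rfl : toWeakBidual x = φ := hx
  have hxC : x ∉ C := fun h => hφ ⟨x, h, rfl⟩
  obtain ⟨g, u, hgC, hgx⟩ := geometric_hahn_banach_closed_point hC hCc hxC
  refine mem_of_superset (((WeakDual.eval_continuous g).isOpen_preimage _ isOpen_Ioi).mem_nhds
    hgx) ?_
  rintro ψ hψ ⟨b, hb, rfl⟩
  exact (hgC b hb).not_gt hψ

lemma IsReflexiveSpace.isCompact_image_toWeakBidual (hX : IsReflexiveSpace X) {C : Set X}
    (hCc : IsClosed C) (hC : Convex ℝ C) (hCb : IsBounded C) : IsCompact (toWeakBidual '' C) :=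
  WeakDual.isCompact_of_bounded_of_closed
    ((NormedSpace.inclusionInDoubleDualLi ℝ).lipschitz.isBounded_image hCb)
    (hX.isClosed_image_toWeakBidual hCc hC)

lemma IsReflexiveSpace.nonempty_iInter_of_directed {ι : Type*} [Nonempty ι]
    (hX : IsReflexiveSpace X) (t : ι → Set X) (htd : Directed (· ⊇ ·) t) (htn : ∀ i, (t i).Nonempty)
    (htc : ∀ i, IsClosed (t i)) (htconv : ∀ i, Convex ℝ (t i)) (htb : ∀ i, IsBounded (t i)) :
    (⋂ i, t i).Nonempty := by
  have hcompact i := hX.isCompact_image_toWeakBidual (htc i) (htconv i) (htb i)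
  have hdirected : Directed (· ⊇ ·) fun i => toWeakBidual '' t i :=
    htd.mono_comp (g := image toWeakBidual) _ fun _ _ => image_mono
  rw [← image_nonempty, InjOn.image_iInter_eq toWeakBidual_injective.injOn]
  exact IsCompact.nonempty_iInter_of_directed_nonempty_isCompact_isClosed _ hdirected
    (fun i => (htn i).image _) hcompact fun i => (hcompact i).isClosed

lemma IsReflexiveSpace.exists_isMinOn (hX : IsReflexiveSpace X) {S : Set X} (hSne : S.Nonempty)
    (hSc : IsClosed S) {f : X → ℝ} (hf : LowerSemicontinuous f) (hfS : QuasiconvexOn ℝ S f)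
    (hfb : ∀ r, IsBounded {x ∈ S | f x ≤ r}) : ∃ x ∈ S, IsMinOn f S x := by
  have : Nonempty S := hSne.to_subtype
  have hdirected : Directed (· ⊇ ·) fun y : S => {x ∈ S | f x ≤ f y} := fun y z =>
    (le_total (f y) (f z)).elim (fun h => ⟨y, subset_rfl, fun _ hx => ⟨hx.1, hx.2.trans h⟩⟩)
      fun h => ⟨z, fun _ hx => ⟨hx.1, hx.2.trans h⟩, subset_rfl⟩
  obtain ⟨x, hx⟩ := hX.nonempty_iInter_of_directed _ hdirected (fun y => ⟨y, y.2, le_rfl⟩)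
    (fun y => hSc.inter (hf.isClosed_preimage (f y))) (fun y => hfS (f y)) (fun y => hfb (f y))
  obtain ⟨y⟩ := ‹Nonempty S›
  exact ⟨x, (mem_iInter.mp hx y).1, fun z hz => (mem_iInter.mp hx ⟨z, hz⟩).2⟩

end Reflexive

theorem stmt19_general (F : Set X)
    (hFc : IsClosed F) (hFb : IsBounded F)
    (hF0 : (0 : X) ∈ interior F) (hFs : StrictConvex ℝ F)
    (S : Set X) (hSne : S.Nonempty) (hSc : IsClosed S) (hSconv : Convex ℝ S)
    (m : ℕ) (hm : 1 ≤ m) (a : Fin m → X)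
    (hnotcol : ¬ ∃ x y : X, x ≠ y ∧ ∀ i, a i ∈ lineThrough x y) :
    {x ∈ S | ∀ y ∈ S,
      ∑ i : Fin m, rhoF F (a i - x) ≤ ∑ i : Fin m, rhoF F (a i - y)}.Subsingleton ∧
    (((CompleteSpace X ∧ IsReflexiveSpace X) ∨ IsCompact S) →
      ∃! x : X, x ∈ S ∧ ∀ y ∈ S,
        ∑ i : Fin m, rhoF F (a i - x) ≤ ∑ i : Fin m, rhoF F (a i - y)) := by
  have hF0' : F ∈ 𝓝 0 := mem_interior_iff_mem_nhds.mp hF0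
  have : Nonempty (Fin m) := ⟨⟨0, hm⟩⟩
  simp only [rhoF_eq_gauge (interior_subset hF0)]
  have huniq := subsingleton_setOf_isMinOn_sum_gauge_sub hFc hFb hFs hF0' hSconv hnotcol
  refine ⟨huniq, fun hX => ?_⟩
  have hcont := continuous_sum_gauge_sub (a := a) hFs.convex hF0'
  obtain ⟨x, hxS, hx⟩ : ∃ x ∈ S, IsMinOn (fun x => ∑ i, gauge F (a i - x)) S x := by
    rcases hX with ⟨-, hX⟩ | hS
    · exact hX.exists_isMinOn hSne hSc hcont.lowerSemicontinuous
        ((convexOn_sum_gauge_sub hFs.convex hF0').subset (subset_univ S) hSconv).quasiconvexOn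
        fun r => (isBounded_setOf_sum_gauge_sub_le hFb hF0' r).subset fun x hx => hx.2
    · exact hS.exists_isMinOn hSne hcont.continuousOn
  exact ⟨x, ⟨hxS, hx⟩, fun y hy => huniq hy ⟨hxS, hx⟩⟩

/-- Corollary 3.14. -/
theorem stmt19 (F : Set X)
    (hFc : IsClosed F) (hFb : IsBounded F) (hFconv : Convex ℝ F)
    (hF0 : (0 : X) ∈ interior F) (hFs : StrictConvex ℝ F)
    (S : Set X) (hSne : S.Nonempty) (hSc : IsClosed S) (hSconv : Convex ℝ S)
    (m : ℕ) (hm : 1 ≤ m) (a : Fin m → X)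
    (hnotcol : ¬ ∃ x y : X, x ≠ y ∧ ∀ i, a i ∈ lineThrough x y) :
    {x ∈ S | ∀ y ∈ S,
      ∑ i : Fin m, rhoF F (a i - x) ≤ ∑ i : Fin m, rhoF F (a i - y)}.Subsingleton ∧
    (((CompleteSpace X ∧ IsReflexiveSpace X) ∨ IsCompact S) →
      ∃! x : X, x ∈ S ∧ ∀ y ∈ S,
        ∑ i : Fin m, rhoF F (a i - x) ≤ ∑ i : Fin m, rhoF F (a i - y)) :=
  stmt19_general F hFc hFb hF0 hFs S hSne hSc hSconv m hm a hnotcol
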